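/- Fix 0 < k < 1/10 and let ϕ : ℝ → ℝ be defined by ϕ(0) = 0 and ϕ(x) = k/n − k·x whenever |x| ∈ (1/(n+1), 1/n] ∪ (n, n+1] for some n = 1,2,…. Consider the boundary value problem: −u''(t) = sin(t) + ϕ(u(√(1−t))) + u(√t)/(5√t) for a.e. t ∈ [0,1], with u(0) = u(1) = 0. Then the functions α(t) = t² − t and β(t) = t − t² on [0,1] are respectively a lower and an upper solution: α(0) = α(1) = β(0) = β(1) = 0, and for a.e. t ∈ [0,1], sin(t) + ϕ(1 − t − √(1−t)) + (√t − 1)/5 ≥ −2 = −α''(t) and sin(t) + ϕ(√(1−t) − (1−t)) + (1 − √t)/5 ≤ 2 = −β''(t). -/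

import Mathlib

/-! On `[0, 1]` both deviated arguments stay in `[0, 1]`, where `|t² − t| ≤ 1/4`; on `[−1/2, 1/2]`
the prescribed `ϕ` has `|ϕ| ≤ k`, so the right-hand side evaluated at `α` or `β` stays within
`[−2, 2]`. Measurability comes from writing `ϕ` on `[−1, 1]` through `⌊1/|x|⌋₊`. -/

open MeasureTheory Set intervalIntegral Real Filter

noncomputable section

/-- `u` restricted to `[0,T]` belongs to `W^{2,1}`, with (a.e.) second derivative `g`. -/
def IsW21On (T : ℝ) (u g : ℝ → ℝ) : Prop :=
  IntegrableOn g (Icc (0:ℝ) T) ∧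
  ∃ v : ℝ → ℝ,
    (∀ t ∈ Icc (0:ℝ) T, HasDerivWithinAt u (v t) (Icc (0:ℝ) T) t) ∧
    (∀ t ∈ Icc (0:ℝ) T, v t = v 0 + ∫ s in (0:ℝ)..t, g s)

/-- The right-hand side of Example 4.3. -/
def rhsEx1 (ϕ : ℝ → ℝ) (u : ℝ → ℝ) (t : ℝ) : ℝ :=
  Real.sin t + ϕ (u (Real.sqrt (1 - t))) + u (Real.sqrt t) / (5 * Real.sqrt t)

/-- Solution of the Dirichlet problem of Example 4.3. -/
def IsSolutionEx1 (ϕ : ℝ → ℝ) (u : ℝ → ℝ) : Prop :=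
  ContinuousOn u (Icc (0:ℝ) 1) ∧
  (∃ g : ℝ → ℝ, IsW21On 1 u g ∧
    ∀ᵐ t ∂(volume.restrict (Icc (0:ℝ) 1)), -g t = rhsEx1 ϕ u t) ∧
  u 0 = 0 ∧ u 1 = 0

/-- Lower solution of the Dirichlet problem of Example 4.3. -/
def IsLowerSolutionEx1 (ϕ : ℝ → ℝ) (α : ℝ → ℝ) : Prop :=
  ContinuousOn α (Icc (0:ℝ) 1) ∧
  AEMeasurable (rhsEx1 ϕ α) (volume.restrict (Icc (0:ℝ) 1)) ∧
  (∃ g : ℝ → ℝ, IsW21On 1 α g ∧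
    ∀ᵐ t ∂(volume.restrict (Icc (0:ℝ) 1)), -g t ≤ rhsEx1 ϕ α t) ∧
  α 0 ≤ 0 ∧ α 1 ≤ 0

/-- Upper solution of the Dirichlet problem of Example 4.3. -/
def IsUpperSolutionEx1 (ϕ : ℝ → ℝ) (β : ℝ → ℝ) : Prop :=
  ContinuousOn β (Icc (0:ℝ) 1) ∧
  AEMeasurable (rhsEx1 ϕ β) (volume.restrict (Icc (0:ℝ) 1)) ∧
  (∃ g : ℝ → ℝ, IsW21On 1 β g ∧
    ∀ᵐ t ∂(volume.restrict (Icc (0:ℝ) 1)), rhsEx1 ϕ β t ≤ -g t) ∧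
  0 ≤ β 0 ∧ 0 ≤ β 1

/-- The `n` with `|x| ∈ (1/(n+1), 1/n]` is `⌊1/|x|⌋₊`; at `x = 0` the junk values
`1/0 = 0` and `k/0 = 0` make the value `0`. -/
def harmonicSawtooth (k x : ℝ) : ℝ :=
  k / (⌊1 / |x|⌋₊ : ℝ) - k * x

lemma mem_Ioc_one_div_floor_one_div {y : ℝ} (hy : 0 < y) (hy1 : y ≤ 1) :
    y ∈ Ioc (1 / ((⌊1 / y⌋₊ : ℝ) + 1)) (1 / (⌊1 / y⌋₊ : ℝ)) := by
  have hn : (1 : ℝ) ≤ ⌊1 / y⌋₊ := by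
    exact_mod_cast (Nat.one_le_floor_iff _).mpr (by rwa [le_div_iff₀ hy, one_mul])
  have hle : (⌊1 / y⌋₊ : ℝ) ≤ 1 / y := Nat.floor_le (by positivity)
  have hlt : 1 / y < ⌊1 / y⌋₊ + 1 := Nat.lt_floor_add_one _
  constructor
  · rw [div_lt_iff₀ (by positivity)]
    rwa [div_lt_iff₀ hy, mul_comm] at hlt
  · rw [le_div_iff₀ (by positivity)]
    rwa [le_div_iff₀ hy, mul_comm] at hle

lemma eq_harmonicSawtooth {k : ℝ} {ϕ : ℝ → ℝ} (hϕ0 : ϕ 0 = 0)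
    (hϕ : ∀ (x : ℝ) (n : ℕ), 1 ≤ n →
      |x| ∈ Ioc (1 / ((n : ℝ) + 1)) (1 / (n : ℝ)) ∪ Ioc (n : ℝ) ((n : ℝ) + 1) →
      ϕ x = k / (n : ℝ) - k * x)
    {x : ℝ} (hx : |x| ≤ 1) : ϕ x = harmonicSawtooth k x := by
  rcases eq_or_ne x 0 with rfl | hx0
  · simp [harmonicSawtooth, hϕ0]
  have hpos : 0 < |x| := abs_pos.mpr hx0
  refine hϕ x _ ((Nat.one_le_floor_iff _).mpr ?_) (Or.inl (mem_Ioc_one_div_floor_one_div hpos hx))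
  rwa [le_div_iff₀ hpos, one_mul]

lemma abs_harmonicSawtooth_le {k x : ℝ} (hx : |x| ≤ 1 / 2) : |harmonicSawtooth k x| ≤ |k| := by
  rcases eq_or_ne x 0 with rfl | hx0
  · simp [harmonicSawtooth]
  have hpos : 0 < |x| := abs_pos.mpr hx0
  have hn : (2 : ℝ) ≤ ⌊1 / |x|⌋₊ := by
    exact_mod_cast Nat.le_floor (by rw [le_div_iff₀ hpos]; push_cast; linarith)
  have hinv : 1 / (⌊1 / |x|⌋₊ : ℝ) ≤ 1 / 2 := one_div_le_one_div_of_le two_pos hn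
  have hinv0 : 0 < 1 / (⌊1 / |x|⌋₊ : ℝ) := by positivity
  obtain ⟨hxl, hxu⟩ := abs_le.mp hx
  calc |harmonicSawtooth k x| = |k| * |1 / (⌊1 / |x|⌋₊ : ℝ) - x| := by
        rw [harmonicSawtooth, ← abs_mul, mul_sub, mul_one_div]
    _ ≤ |k| * 1 := by gcongr; rw [abs_le]; constructor <;> linarith
    _ = |k| := mul_one _

lemma measurable_harmonicSawtooth (k : ℝ) : Measurable (harmonicSawtooth k) :=
  measurable_const.div (measurable_from_top.comp
    (Nat.measurable_floor.comp (measurable_const.div measurable_abs)))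
    |>.sub (measurable_const.mul measurable_id)

lemma sqrt_one_sub_mem_Icc {t : ℝ} (ht : t ∈ Icc (0 : ℝ) 1) : √(1 - t) ∈ Icc (0 : ℝ) 1 :=
  ⟨sqrt_nonneg _, sqrt_le_one.mpr (by linarith [ht.1])⟩

lemma aemeasurable_rhsEx1 {k : ℝ} {ϕ u : ℝ → ℝ}
    (hϕ : ∀ x, |x| ≤ 1 → ϕ x = harmonicSawtooth k x)
    (hu : Measurable u) (hu1 : ∀ s ∈ Icc (0 : ℝ) 1, |u s| ≤ 1) :
    AEMeasurable (rhsEx1 ϕ u) (volume.restrict (Icc (0 : ℝ) 1)) := by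
  have hmeas : Measurable fun t => sin t + harmonicSawtooth k (u (√(1 - t))) + u (√t) / (5 * √t) :=
    (measurable_sin.add ((measurable_harmonicSawtooth k).comp
      (hu.comp (measurable_const.sub measurable_id).sqrt))).add
      ((hu.comp measurable_id.sqrt).div (measurable_const.mul measurable_id.sqrt))
  refine hmeas.aemeasurable.congr ?_
  filter_upwards [ae_restrict_mem measurableSet_Icc] with t ht
  rw [rhsEx1, hϕ _ (hu1 _ (sqrt_one_sub_mem_Icc ht))]

lemma isW21On_of_hasDerivAt {T : ℝ} {u v g : ℝ → ℝ} (hu : ∀ t, HasDerivAt u (v t) t)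
    (hv : ∀ t, HasDerivAt v (g t) t) (hg : Continuous g) : IsW21On T u g := by
  refine ⟨hg.integrableOn_Icc, v, fun t _ => (hu t).hasDerivWithinAt, fun t _ => ?_⟩
  rw [intervalIntegral.integral_eq_sub_of_hasDerivAt (fun s _ => hv s)
    (hg.intervalIntegrable _ _)]
  ring

lemma isW21On_sq_sub_self (T : ℝ) : IsW21On T (fun t => t ^ 2 - t) (fun _ => 2) :=
  isW21On_of_hasDerivAt (v := fun t => 2 * t - 1)
    (fun t => by simpa using (hasDerivAt_pow 2 t).fun_sub (hasDerivAt_id t))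
    (fun t => by simpa using ((hasDerivAt_id t).const_mul 2).sub_const 1) continuous_const

lemma isW21On_self_sub_sq (T : ℝ) : IsW21On T (fun t => t - t ^ 2) (fun _ => -2) :=
  isW21On_of_hasDerivAt (v := fun t => 1 - 2 * t)
    (fun t => by simpa using (hasDerivAt_id t).fun_sub (hasDerivAt_pow 2 t))
    (fun t => by simpa using ((hasDerivAt_id t).const_mul 2).const_sub 1) continuous_const

lemma abs_sq_sub_self_le {s : ℝ} (hs : s ∈ Icc (0 : ℝ) 1) : |s ^ 2 - s| ≤ 1 / 4 := by
  rw [abs_le]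
  constructor <;> nlinarith [hs.1, hs.2, sq_nonneg (s - 1 / 2)]

lemma rhsEx1_sq_sub_self (ϕ : ℝ → ℝ) {t : ℝ} (ht : t ∈ Ioc (0 : ℝ) 1) :
    rhsEx1 ϕ (fun t => t ^ 2 - t) t = sin t + ϕ (1 - t - √(1 - t)) + (√t - 1) / 5 := by
  have hs : 0 < √t := sqrt_pos.mpr ht.1
  rw [rhsEx1, sq_sqrt (by linarith [ht.2]), sq_sqrt ht.1.le]
  congr 1
  field_simp
  linear_combination -sq_sqrt ht.1.le

lemma rhsEx1_self_sub_sq (ϕ : ℝ → ℝ) {t : ℝ} (ht : t ∈ Ioc (0 : ℝ) 1) :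
    rhsEx1 ϕ (fun t => t - t ^ 2) t = sin t + ϕ (√(1 - t) - (1 - t)) + (1 - √t) / 5 := by
  have hs : 0 < √t := sqrt_pos.mpr ht.1
  rw [rhsEx1, sq_sqrt (by linarith [ht.2]), sq_sqrt ht.1.le]
  congr 1
  field_simp
  linear_combination sq_sqrt ht.1.le

lemma rhs_bounds_of_abs_le {ϕ : ℝ → ℝ} (hϕ : ∀ x, |x| ≤ 1 / 2 → |ϕ x| ≤ 4 / 5) {t : ℝ}
    (ht : t ∈ Icc (0 : ℝ) 1) :
    -2 ≤ sin t + ϕ (1 - t - √(1 - t)) + (√t - 1) / 5 ∧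
      sin t + ϕ (√(1 - t) - (1 - t)) + (1 - √t) / 5 ≤ 2 := by
  have harg := abs_sq_sub_self_le (sqrt_one_sub_mem_Icc ht)
  rw [sq_sqrt (by linarith [ht.2])] at harg
  have hα := abs_le.mp (hϕ (1 - t - √(1 - t)) (by linarith))
  have hβ := abs_le.mp (hϕ (√(1 - t) - (1 - t)) (by rw [abs_sub_comm]; linarith))
  have hsin : 0 ≤ sin t := sin_nonneg_of_nonneg_of_le_pi ht.1 (by linarith [ht.2, pi_gt_three])
  constructor <;> linarith [sin_le_one t, sqrt_nonneg t, hα.1, hβ.2]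

/-- **Example 4.3, lower and upper solutions.** With `ϕ(0) = 0` and
`ϕ(x) = k/n − kx` for `|x| ∈ (1/(n+1), 1/n] ∪ (n, n+1]`, `0 < k < 1/10`, the functions
`α(t) = t² − t` and `β(t) = t − t²` are respectively a lower and an upper solution of
`−u'' = sin t + ϕ(u(√(1−t))) + u(√t)/(5√t)`, `u(0) = u(1) = 0`. -/
theorem example1_lower_upper_solutions
    (k : ℝ) (hk0 : 0 < k) (hk : k < 1 / 10)
    (ϕ : ℝ → ℝ) (hϕ0 : ϕ 0 = 0)
    (hϕ : ∀ (x : ℝ) (n : ℕ), 1 ≤ n →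
      |x| ∈ Ioc (1 / ((n : ℝ) + 1)) (1 / (n : ℝ)) ∪ Ioc (n : ℝ) ((n : ℝ) + 1) →
      ϕ x = k / (n : ℝ) - k * x) :
    IsLowerSolutionEx1 ϕ (fun t => t ^ 2 - t) ∧
    IsUpperSolutionEx1 ϕ (fun t => t - t ^ 2) ∧
    (fun t : ℝ => t ^ 2 - t) 0 = 0 ∧ (fun t : ℝ => t ^ 2 - t) 1 = 0 ∧
    (fun t : ℝ => t - t ^ 2) 0 = 0 ∧ (fun t : ℝ => t - t ^ 2) 1 = 0 ∧
    IsW21On 1 (fun t => t ^ 2 - t) (fun _ => (2 : ℝ)) ∧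
    IsW21On 1 (fun t => t - t ^ 2) (fun _ => (-2 : ℝ)) ∧
    (∀ᵐ t ∂(volume.restrict (Icc (0:ℝ) 1)),
      -2 ≤ Real.sin t + ϕ (1 - t - Real.sqrt (1 - t)) + (Real.sqrt t - 1) / 5 ∧
      Real.sin t + ϕ (Real.sqrt (1 - t) - (1 - t)) + (1 - Real.sqrt t) / 5 ≤ 2) := by
  have hsaw : ∀ x, |x| ≤ 1 → ϕ x = harmonicSawtooth k x := fun x hx =>
    eq_harmonicSawtooth hϕ0 hϕ hx
  have hbound : ∀ x, |x| ≤ 1 / 2 → |ϕ x| ≤ 4 / 5 := fun x hx => by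
    rw [hsaw x (by linarith)]
    exact (abs_harmonicSawtooth_le hx).trans (by rw [abs_of_pos hk0]; linarith)
  have hineq : ∀ᵐ t ∂(volume.restrict (Icc (0 : ℝ) 1)),
      -2 ≤ sin t + ϕ (1 - t - √(1 - t)) + (√t - 1) / 5 ∧
        sin t + ϕ (√(1 - t) - (1 - t)) + (1 - √t) / 5 ≤ 2 := by
    filter_upwards [ae_restrict_mem measurableSet_Icc] with t ht using rhs_bounds_of_abs_le hbound ht
  have hpos : ∀ᵐ t ∂(volume.restrict (Icc (0 : ℝ) 1)), t ∈ Ioc (0 : ℝ) 1 := by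
    rw [Measure.restrict_congr_set Ioc_ae_eq_Icc.symm]
    exact ae_restrict_mem measurableSet_Ioc
  have hα1 : ∀ s ∈ Icc (0 : ℝ) 1, |s ^ 2 - s| ≤ 1 := fun s hs =>
    (abs_sq_sub_self_le hs).trans (by norm_num)
  have hβ1 : ∀ s ∈ Icc (0 : ℝ) 1, |s - s ^ 2| ≤ 1 := fun s hs => by
    rw [abs_sub_comm]; exact hα1 s hs
  refine ⟨⟨by fun_prop, aemeasurable_rhsEx1 hsaw (by fun_prop) hα1,
      ⟨_, isW21On_sq_sub_self 1, ?_⟩, by norm_num, by norm_num⟩,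
    ⟨by fun_prop, aemeasurable_rhsEx1 hsaw (by fun_prop) hβ1,
      ⟨_, isW21On_self_sub_sq 1, ?_⟩, by norm_num, by norm_num⟩,
    by norm_num, by norm_num, by norm_num, by norm_num,
    isW21On_sq_sub_self 1, isW21On_self_sub_sq 1, hineq⟩
  · filter_upwards [hineq, hpos] with t h ht
    rw [rhsEx1_sq_sub_self ϕ ht]
    exact h.1
  · filter_upwards [hineq, hpos] with t h ht
    rw [rhsEx1_self_sub_sq ϕ ht, neg_neg]
    exact h.2

end
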